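/- arXiv:2102.01545 — 2 statements merged into one kernel-verified Lean document; each statement's English description precedes it below -/
import Mathlib

section
/- Fix a topological generator γ of Γ and let u, κ ∈ ⋂^r_Λ U_{K_∞,Σ,T} be norm-coherent sequences (with components u_n, κ_n at level n and bottom values u_0, κ_0) satisfying u = (γ−1)^e·κ. Then for every n ∈ ℕ one has 𝒩_n(u_n) = ν_n(κ_0 ⊗ (γ−1)^e), where 𝒩_n(a) = Σ_{σ∈Γ_n} σa ⊗ σ^{-1} is Darmon's twisted norm operator with values in (⋂^r_{Zp[𝒢]} U_{K,Σ,T}) ⊗_{Zp} Zp[Γ_n]/I(Γ_n)^{e+1}. In particular, Σ_{σ∈Γ_n} σu_n ⊗ σ^{-1} = (N_{Γ_n}κ_n) ⊗ (γ−1)^e in this module. -/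
/-!
STATEMENT 5 (Lemma 4.6, norm calculation).  Fix a topological generator `γ` of `Γ` and
let `u, κ ∈ ⋂^r_Λ U_{K_∞,Σ,T}` be norm-coherent sequences satisfying
`u = (γ−1)^e·κ`.  Then for every `n` one has `𝒩_n(u_n) = ν_n(κ_0 ⊗ (γ−1)^e)`; in
particular, writing everything at level `n`,
`Σ_{σ∈Γ_n} σu_n ⊗ σ⁻¹ = (N_{Γ_n} κ_n) ⊗ (γ−1)^e`
in `(⋂^r_{Z_p[𝒢_n]} U_{K_n,Σ,T}) ⊗_{Z_p} Z_p[Γ_n]/I(Γ_n)^{e+1}`.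

Formalisation.  We work at level `n`:  `G = 𝒢_n = Gal(K_n/k)` is a finite abelian
group, `H = Γ_n = Gal(K_n/K) ≤ 𝒢_n` is cyclic of order `p^n` generated by (the image
of the topological generator) `γ`, and `M` is the `Z_p[𝒢_n]`-module
`⋂^r_{Z_p[𝒢_n]} U_{K_n,Σ,T}`.  The augmentation ideal `I(Γ_n) ⊆ Z_p[Γ_n]` is the
kernel of the map sending every group element to `1`.  The elements
`u_n, κ_n ∈ M` of the norm-coherent sequences satisfy `u_n = (γ−1)^e κ_n` (the level-`n`
instance of `u = (γ−1)^e κ`), and the asserted identity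
`𝒩_n(u_n) = Σ_{σ∈Γ_n} σu_n ⊗ σ⁻¹ = (N_{Γ_n}κ_n) ⊗ (γ−1)^e = ν_n(κ_0 ⊗ (γ−1)^e)`
is stated in `M ⊗_{Z_p} Z_p[Γ_n]/I(Γ_n)^{e+1}` (recall that, by definition of `ν_n`,
`ν_n(κ_0 ⊗ x) = ν_n(N^r_{K_n/K}(κ_n) ⊗ x) = (N_{Γ_n}κ_n) ⊗ x`).
-/

open MonoidAlgebra TensorProduct

/-- The augmentation ideal `I(H) = ker(Z_p[H] → Z_p)`. -/
noncomputable def augIdeal (p : ℕ) [Fact p.Prime] (H : Type*) [CommGroup H] :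
    Ideal (MonoidAlgebra ℤ_[p] H) :=
  RingHom.ker ((MonoidAlgebra.lift ℤ_[p] ℤ_[p] H) 1).toRingHom

/-!
Reindexing the sum shows that the twisted norm is semilinear, `𝒩(τm) = (1 ⊗ τ)𝒩(m)`, so
`𝒩((γ-1)^e κ) = Σ_σ σκ ⊗ σ⁻¹(γ-1)^e`. Modulo `I^{e+1}` each `σ⁻¹(γ-1)^e` is `(γ-1)^e`,
because `(σ⁻¹-1)(γ-1)^e ∈ I^{e+1}`.
-/

section TwistedNorm

variable {R : Type*} [CommRing R] {G : Type*} [CommGroup G] (H : Subgroup G) [Fintype H]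
  {M : Type*} [AddCommGroup M] [Module (MonoidAlgebra R G) M] [Module R M]
  {A : Type*} [Ring A] [Algebra R A]

variable (R M) in
noncomputable def tensorLeftMul : A →ₐ[R] Module.End R (M ⊗[R] A) :=
  (Module.End.lTensorAlgHom R A M).comp (Algebra.lmul R A)

@[simp]
theorem tensorLeftMul_tmul (a b : A) (m : M) :
    tensorLeftMul R M a (m ⊗ₜ[R] b) = m ⊗ₜ[R] (a * b) :=
  rfl

variable (R) in
/-- Darmon's twisted norm operator `𝒩`. -/
noncomputable def twistedNorm (χ : H →* A) (m : M) : M ⊗[R] A :=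
  ∑ σ : H, (of R G (σ : G) • m) ⊗ₜ[R] χ σ⁻¹

variable {H}

theorem twistedNorm_sub (χ : H →* A) (m m' : M) :
    twistedNorm R H χ (m - m') = twistedNorm R H χ m - twistedNorm R H χ m' := by
  simp only [twistedNorm, smul_sub, sub_tmul, Finset.sum_sub_distrib]

theorem twistedNorm_of_smul (χ : H →* A) (τ : H) (m : M) :
    twistedNorm R H χ (of R G (τ : G) • m) = tensorLeftMul R M (χ τ) (twistedNorm R H χ m) := by
  simp only [twistedNorm, map_sum, tensorLeftMul_tmul, smul_smul, ← map_mul, ← Subgroup.coe_mul]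
  exact Fintype.sum_equiv (Equiv.mulRight τ) _ _ fun σ => by simp [mul_comm τ]

theorem twistedNorm_sub_one_pow_smul (χ : H →* A) (γ : H) (e : ℕ) (m : M) :
    twistedNorm R H χ ((of R G (γ : G) - 1) ^ e • m) =
      tensorLeftMul R M ((χ γ - 1) ^ e) (twistedNorm R H χ m) := by
  induction e with
  | zero => simp
  | succ e ih =>
    rw [pow_succ', mul_smul, sub_smul, one_smul, twistedNorm_sub, twistedNorm_of_smul, ih,
      pow_succ', map_mul, map_sub, map_one, Module.End.mul_apply, LinearMap.sub_apply,
      Module.End.one_apply]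

end TwistedNorm

theorem sub_one_mem_augIdeal (p : ℕ) [Fact p.Prime] {H : Type*} [CommGroup H] (τ : H) :
    of ℤ_[p] H τ - 1 ∈ augIdeal p H := by
  simp [augIdeal]

theorem mk_augIdeal_pow_succ_mul_of (p : ℕ) [Fact p.Prime] {H : Type*} [CommGroup H]
    {e : ℕ} {y : MonoidAlgebra ℤ_[p] H} (hy : y ∈ augIdeal p H ^ e) (τ : H) :
    Ideal.Quotient.mk (augIdeal p H ^ (e + 1)) (y * of ℤ_[p] H τ) =
      Ideal.Quotient.mk (augIdeal p H ^ (e + 1)) y := by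
  rw [Ideal.Quotient.eq, ← mul_sub_one, pow_succ]
  exact Ideal.mul_mem_mul hy (sub_one_mem_augIdeal p τ)

theorem stmt_5_general (p : ℕ) [Fact p.Prime] (e : ℕ)
    -- `G = 𝒢_n = Gal(K_n/k)`, finite abelian:
    (G : Type) [CommGroup G]
    -- `H = Γ_n = Gal(K_n/K)`, of order `p^n`:
    (H : Subgroup G) [Fintype H]
    -- `γ` generates `Γ_n` (it is the image of a topological generator of `Γ`):
    (γ : H)
    -- `M = ⋂^r_{Z_p[𝒢_n]} U_{K_n,Σ,T}`:
    (M : Type) [AddCommGroup M] [Module (MonoidAlgebra ℤ_[p] G) M]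
    [Module ℤ_[p] M]
    -- the level-`n` components of the norm-coherent sequences `u = (γ−1)^e κ`:
    (u κ : M)
    (h : u = ((of ℤ_[p] G (γ : G) - 1) ^ e) • κ) :
    -- `𝒩_n(u_n) = Σ_{σ∈Γ_n} σu_n ⊗ σ⁻¹  =  (N_{Γ_n}κ_n) ⊗ (γ−1)^e  (= ν_n(κ_0 ⊗ (γ−1)^e))`
    -- in `M ⊗_{Z_p} Z_p[Γ_n]/I(Γ_n)^{e+1}`:
    (∑ σ : H, (((of ℤ_[p] G (σ : G)) • u) ⊗ₜ[ℤ_[p]]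
        (Ideal.Quotient.mk ((augIdeal p H) ^ (e + 1)) (of ℤ_[p] H σ⁻¹))))
      = ((∑ σ : H, of ℤ_[p] G (σ : G)) • κ) ⊗ₜ[ℤ_[p]]
          (Ideal.Quotient.mk ((augIdeal p H) ^ (e + 1)) ((of ℤ_[p] H γ - 1) ^ e)) := by
  have hnorm := twistedNorm_sub_one_pow_smul (R := ℤ_[p])
    ((Ideal.Quotient.mk (augIdeal p H ^ (e + 1))).toMonoidHom.comp (of ℤ_[p] H)) γ e κ
  have hpow : (Ideal.Quotient.mk (augIdeal p H ^ (e + 1)) (of ℤ_[p] H γ) - 1) ^ e =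
      Ideal.Quotient.mk (augIdeal p H ^ (e + 1)) ((of ℤ_[p] H γ - 1) ^ e) := by
    rw [map_pow, map_sub, map_one]
  have hmem := Ideal.pow_mem_pow (sub_one_mem_augIdeal p γ) e
  simp only [twistedNorm, ← h, MonoidHom.comp_apply, RingHom.toMonoidHom_eq_coe,
    MonoidHom.coe_coe, hpow, map_sum, tensorLeftMul_tmul, ← map_mul,
    mk_augIdeal_pow_succ_mul_of p hmem] at hnorm
  rw [hnorm, Finset.sum_smul, sum_tmul]

theorem stmt_5 (p : ℕ) [Fact p.Prime] (n e : ℕ)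
    -- `G = 𝒢_n = Gal(K_n/k)`, finite abelian:
    (G : Type) [CommGroup G] [Fintype G]
    -- `H = Γ_n = Gal(K_n/K)`, of order `p^n`:
    (H : Subgroup G) [Fintype H] (hH : Nat.card H = p ^ n)
    -- `γ` generates `Γ_n` (it is the image of a topological generator of `Γ`):
    (γ : H) (hγ : ∀ h : H, h ∈ Subgroup.zpowers γ)
    -- `M = ⋂^r_{Z_p[𝒢_n]} U_{K_n,Σ,T}`:
    (M : Type) [AddCommGroup M] [Module (MonoidAlgebra ℤ_[p] G) M]
    [Module ℤ_[p] M] [IsScalarTower ℤ_[p] (MonoidAlgebra ℤ_[p] G) M]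
    -- the level-`n` components of the norm-coherent sequences `u = (γ−1)^e κ`:
    (u κ : M)
    (h : u = ((of ℤ_[p] G (γ : G) - 1) ^ e) • κ) :
    -- `𝒩_n(u_n) = Σ_{σ∈Γ_n} σu_n ⊗ σ⁻¹  =  (N_{Γ_n}κ_n) ⊗ (γ−1)^e  (= ν_n(κ_0 ⊗ (γ−1)^e))`
    -- in `M ⊗_{Z_p} Z_p[Γ_n]/I(Γ_n)^{e+1}`:
    (∑ σ : H, (((of ℤ_[p] G (σ : G)) • u) ⊗ₜ[ℤ_[p]]
        (Ideal.Quotient.mk ((augIdeal p H) ^ (e + 1)) (of ℤ_[p] H σ⁻¹))))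
      = ((∑ σ : H, of ℤ_[p] G (σ : G)) • κ) ⊗ₜ[ℤ_[p]]
          (Ideal.Quotient.mk ((augIdeal p H) ^ (e + 1)) ((of ℤ_[p] H γ - 1) ^ e)) :=
  stmt_5_general p e G H γ M u κ h
end

section
/- Let N/ℚ be a normal extension of number fields and let x ∈ O_{N,S_p(N)} (an S_p-integer of N) be such that log_p(N_{N_𝔭/ℚ_p}(x)) = 0 for all 𝔭 ∈ S_p(N). Then the valuation ord_𝔭(x) is the same for all 𝔭 ∈ S_p(N). -/
/-!
Let `𝔭₀ ∣ p` be a place at which `|x|` is largest, `D` its decomposition group and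
`y = ∏_{σ ∈ D} σ x`. Since a power of `y` is a power of `p` and the places above `p` are
Galois conjugate, `|y|_𝔮 = |y|_{𝔭₀} = |x|_{𝔭₀}^{#D}` for every `𝔮 ∣ p`. On the other hand
`|y|_𝔮 = ∏_{σ ∈ D} |x|_{σ⁻¹𝔮}` is a product of `#D` factors, each at most `|x|_{𝔭₀}`, so every
factor, in particular `|x|_𝔮`, equals `|x|_{𝔭₀}`.
-/

open IsDedekindDomain NumberField WithZero
open scoped Finset

namespace IsDedekindDomain.HeightOneSpectrum

variable {R S : Type*} [CommRing R] [IsDedekindDomain R] [CommRing S] [IsDedekindDomain S]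

lemma setOf_mem_asIdeal_finite {r : R} (hr : r ≠ 0) :
    Set.Finite {v : HeightOneSpectrum R | r ∈ v.asIdeal} :=
  (Ideal.finite_factors (by simpa using hr)).subset fun _ hv => Ideal.dvd_span_singleton.2 hv

lemma intValuation_equivOfRingEquiv_symm (e : R ≃+* S) (v : HeightOneSpectrum S) (r : R) :
    ((equivOfRingEquiv e).symm v).intValuation r = v.intValuation (e r) := by
  have hle (n : ℕ) : ((equivOfRingEquiv e).symm v).intValuation r ≤ exp (-(n : ℤ)) ↔
      v.intValuation (e r) ≤ exp (-(n : ℤ)) := by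
    rw [intValuation_le_pow_iff_mem, intValuation_le_pow_iff_mem]
    change r ∈ (v.asIdeal.comap e) ^ n ↔ _
    rw [← Ideal.map_symm, ← Ideal.map_pow, Ideal.map_symm, Ideal.mem_comap]
  -- the valuation of a nonzero element is itself one of the thresholds `exp (-n)`
  rcases eq_or_ne r 0 with rfl | hr
  · simp
  have her : e r ≠ 0 := (map_ne_zero_iff e e.injective).2 hr
  apply le_antisymm
  · rw [v.intValuation_if_neg her]
    exact (hle _).2 (v.intValuation_if_neg her).le
  · rw [intValuation_if_neg _ hr]
    exact (hle _).1 (intValuation_if_neg _ hr).le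

variable (K L : Type*) [Field K] [Algebra R K] [IsFractionRing R K]
  [Field L] [Algebra S L] [IsFractionRing S L]

lemma valuation_equivOfRingEquiv_symm (e : R ≃+* S) {σ : K ≃+* L}
    (hσ : ∀ r, σ (algebraMap R K r) = algebraMap S L (e r)) (v : HeightOneSpectrum S) (y : K) :
    ((equivOfRingEquiv e).symm v).valuation K y = v.valuation L (σ y) := by
  obtain ⟨a, b, -, rfl⟩ := IsFractionRing.div_surjective (A := R) y
  simp only [map_div₀, hσ, valuation_of_algebraMap, intValuation_equivOfRingEquiv_symm]

end IsDedekindDomain.HeightOneSpectrum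

lemma Finset.apply_eq_of_prod_eq_pow_card {ι α : Type*} [LinearOrderedCommGroupWithZero α]
    {s : Finset ι} {f : ι → α} {M : α} (hf : ∀ i ∈ s, f i ≤ M) (hprod : ∏ i ∈ s, f i = M ^ #s)
    {i : ι} (hi : i ∈ s) : f i = M := by
  classical
  refine le_antisymm (hf i hi) ?_
  rcases eq_or_ne M 0 with rfl | hM
  · exact zero_le
  have hrest : ∏ j ∈ s.erase i, f j ≤ M ^ (#s - 1) := by
    rw [← card_erase_of_mem hi]
    exact prod_le_pow_card _ _ _ fun j hj => hf j (mem_of_mem_erase hj)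
  have hcard : #s = #s - 1 + 1 := (Nat.sub_add_cancel (card_pos.2 ⟨i, hi⟩)).symm
  refine le_of_mul_le_mul_right ?_ (pow_pos (zero_lt_iff.2 hM) (#s - 1))
  calc M * M ^ (#s - 1) = ∏ j ∈ s, f j := by rw [hprod, ← pow_succ', ← hcard]
    _ = f i * ∏ j ∈ s.erase i, f j := (mul_prod_erase s f hi).symm
    _ ≤ f i * M ^ (#s - 1) := by gcongr

namespace NumberField

variable {K : Type*} [Field K] [NumberField K]

noncomputable def galComap (σ : K ≃ₐ[ℚ] K) (w : HeightOneSpectrum (𝓞 K)) :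
    HeightOneSpectrum (𝓞 K) :=
  (HeightOneSpectrum.equivOfRingEquiv (galRestrict ℤ ℚ K (𝓞 K) σ : 𝓞 K ≃+* 𝓞 K)).symm w

lemma valuation_galComap (σ : K ≃ₐ[ℚ] K) (w : HeightOneSpectrum (𝓞 K)) (y : K) :
    (galComap σ w).valuation K y = w.valuation K (σ y) :=
  HeightOneSpectrum.valuation_equivOfRingEquiv_symm K K _ (σ := (σ : K ≃+* K))
    (fun r => (algebraMap_galRestrict_apply ℤ σ r).symm) w y

lemma natCast_mem_galComap {p : ℕ} (σ : K ≃ₐ[ℚ] K) {w : HeightOneSpectrum (𝓞 K)}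
    (hw : (p : 𝓞 K) ∈ w.asIdeal) : (p : 𝓞 K) ∈ (galComap σ w).asIdeal := by
  change _ ∈ w.asIdeal.comap _
  rwa [Ideal.mem_comap, map_natCast]

lemma exists_galComap_eq [IsGalois ℚ K] {p : ℕ} (hp : p.Prime) {v w : HeightOneSpectrum (𝓞 K)}
    (hv : (p : 𝓞 K) ∈ v.asIdeal) (hw : (p : 𝓞 K) ∈ w.asIdeal) :
    ∃ σ : K ≃ₐ[ℚ] K, galComap σ w = v := by
  have hpZ : Prime (p : ℤ) := Nat.prime_iff_prime_int.1 hp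
  have hover {u : HeightOneSpectrum (𝓞 K)} (hu : (p : 𝓞 K) ∈ u.asIdeal) :
      u.asIdeal ∈ (Ideal.span {(p : ℤ)}).primesOver (𝓞 K) :=
    ⟨u.isPrime, (Ideal.liesOver_span_iff u.isPrime.ne_top hpZ).2 (by simpa using hu)⟩
  obtain ⟨σ, hσ⟩ := Ideal.exists_comap_galRestrict_eq ℤ ℚ K (𝓞 K) (hover hw) (hover hv)
  exact ⟨σ, HeightOneSpectrum.ext hσ⟩

lemma valuation_eq_of_zpow_eq_natCast_zpow [IsGalois ℚ K] {p : ℕ} (hp : p.Prime)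
    {v w : HeightOneSpectrum (𝓞 K)} (hv : (p : 𝓞 K) ∈ v.asIdeal) (hw : (p : 𝓞 K) ∈ w.asIdeal)
    {y : K} {n : ℕ} {m : ℤ} (hn : n ≠ 0) (hy : y ^ (n : ℤ) = (p : K) ^ m) :
    v.valuation K y = w.valuation K y := by
  obtain ⟨σ, rfl⟩ := exists_galComap_eq hp hv hw
  have hval (u : HeightOneSpectrum (𝓞 K)) : u.valuation K y ^ n = u.valuation K (p : K) ^ m := by
    rw [← zpow_natCast, ← map_zpow₀, hy, map_zpow₀]
  refine (pow_left_inj₀ zero_le zero_le hn).1 ?_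
  rw [hval, hval, valuation_galComap, map_natCast]

end NumberField

open scoped Classical in
theorem stmt_10_general (p : ℕ) [Fact p.Prime] (N : Type*) [Field N] [NumberField N]
    [IsGalois ℚ N] (x : N)
    -- `log_p (N_{N_𝔭/ℚ_p}(x)) = 0` for all `𝔭 ∈ S_p(N)`:
    (hlog : ∀ v : HeightOneSpectrum (𝓞 N), (p : 𝓞 N) ∈ v.asIdeal →
      ∃ (n : ℕ) (m : ℤ), 0 < n ∧
        (∏ σ ∈ Finset.univ.filter
            (fun σ : N ≃ₐ[ℚ] N => ∀ y : N,
              v.valuation (K := N) (σ y) = v.valuation (K := N) y),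
          σ x) ^ (n : ℤ) = (p : N) ^ m) :
    -- `ord_𝔭(x)` is the same for all `𝔭 ∈ S_p(N)`:
    ∀ v w : HeightOneSpectrum (𝓞 N),
      (p : 𝓞 N) ∈ v.asIdeal → (p : 𝓞 N) ∈ w.asIdeal →
      v.valuation (K := N) x = w.valuation (K := N) x := by
  intro v w hv hw
  have hp : p.Prime := Fact.out
  obtain ⟨v₀, hv₀, hmax⟩ := Set.exists_max_image _ (fun u => u.valuation N x)
    (HeightOneSpectrum.setOf_mem_asIdeal_finite (r := (p : 𝓞 N))
      (by exact_mod_cast hp.ne_zero)) ⟨v, hv⟩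
  obtain ⟨n, m, hn, hnorm⟩ := hlog v₀ hv₀
  set D := Finset.univ.filter (fun σ : N ≃ₐ[ℚ] N => ∀ y : N,
    v₀.valuation (K := N) (σ y) = v₀.valuation (K := N) y)
  suffices h : ∀ u : HeightOneSpectrum (𝓞 N), (p : 𝓞 N) ∈ u.asIdeal →
      u.valuation N x = v₀.valuation N x from (h v hv).trans (h w hw).symm
  intro u hu
  have hprod : ∏ σ ∈ D, (galComap σ u).valuation N x = v₀.valuation N x ^ #D :=
    calc ∏ σ ∈ D, (galComap σ u).valuation N x = u.valuation N (∏ σ ∈ D, σ x) := by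
          simp only [valuation_galComap, map_prod]
      _ = v₀.valuation N (∏ σ ∈ D, σ x) :=
          valuation_eq_of_zpow_eq_natCast_zpow hp hu hv₀ hn.ne' hnorm
      _ = v₀.valuation N x ^ #D := by
          rw [map_prod]
          exact Finset.prod_eq_pow_card fun σ hσ => (Finset.mem_filter.1 hσ).2 x
  have hfactor_one := Finset.apply_eq_of_prod_eq_pow_card
    (fun σ _ => hmax _ (natCast_mem_galComap σ hu)) hprod
    (Finset.mem_filter.2 ⟨Finset.mem_univ 1, fun _ => rfl⟩)
  rwa [valuation_galComap, AlgEquiv.one_apply] at hfactor_one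

open scoped Classical in
theorem stmt_10 (p : ℕ) [Fact p.Prime] (N : Type*) [Field N] [NumberField N]
    [IsGalois ℚ N] (x : N)
    -- `x` is an `S_p(N)`-integer:
    (hx : ∀ v : HeightOneSpectrum (𝓞 N), (p : 𝓞 N) ∉ v.asIdeal →
      v.valuation (K := N) x ≤ 1)
    -- `log_p (N_{N_𝔭/ℚ_p}(x)) = 0` for all `𝔭 ∈ S_p(N)`:
    (hlog : ∀ v : HeightOneSpectrum (𝓞 N), (p : 𝓞 N) ∈ v.asIdeal →
      ∃ (n : ℕ) (m : ℤ), 0 < n ∧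
        (∏ σ ∈ Finset.univ.filter
            (fun σ : N ≃ₐ[ℚ] N => ∀ y : N,
              v.valuation (K := N) (σ y) = v.valuation (K := N) y),
          σ x) ^ (n : ℤ) = (p : N) ^ m) :
    -- `ord_𝔭(x)` is the same for all `𝔭 ∈ S_p(N)`:
    ∀ v w : HeightOneSpectrum (𝓞 N),
      (p : 𝓞 N) ∈ v.asIdeal → (p : 𝓞 N) ∈ w.asIdeal →
      v.valuation (K := N) x = w.valuation (K := N) x :=
  stmt_10_general p N x hlog
end
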